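/- arXiv:math/0008015 — 5 statements merged into one kernel-verified Lean document; each statement's English description precedes it below -/
import Mathlib

section
/- Suppose p(z) = 0 and m = 3. Then the log-term coefficient c of z^2 u'' + q(z) u = 0 vanishes if and only if q_3 + q_1 q_2 + (1/4) q_1^3 = 0. -/
/-- For z²u'' + q(z)u = 0 (p ≡ 0) with indicial root difference m = 3,
the log-term coefficient c (from a₀ = 1, a_j = (1/(j(3-j)))·Σ_{k<j} q_{j-k} a_k for
j = 1,2, and c = -(1/3)·Σ_{k<3} q_{3-k} a_k) vanishes iff q₃ + q₁q₂ + (1/4)q₁³ = 0. -/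
theorem logterm_m3 (q a : ℕ → ℂ) (c : ℂ)
    (ha0 : a 0 = 1)
    (ha1 : a 1 = (1 / ((1 : ℂ) * ((3 : ℂ) - 1))) * ∑ k ∈ Finset.range 1, q (1 - k) * a k)
    (ha2 : a 2 = (1 / ((2 : ℂ) * ((3 : ℂ) - 2))) * ∑ k ∈ Finset.range 2, q (2 - k) * a k)
    (hc : c = -(1 / (3 : ℂ)) * ∑ k ∈ Finset.range 3, q (3 - k) * a k) :
    c = 0 ↔ q 3 + q 1 * q 2 + (1 / 4) * (q 1) ^ 3 = 0 := by
  simp [Finset.sum_range_succ] at ha1 ha2 hc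
  rw [ha0] at ha1 ha2 hc
  rw [ha1] at ha2 hc
  rw [ha2] at hc
  subst hc
  constructor <;> intro h <;> [linear_combination -3 * h; linear_combination -h/3]
end

section
/- Let G(z) = z^2 and Q = θ/(z(z-1)^4) dz^2, θ ∈ ℂ \ {0}, and r dz^2 = S(G)/2 + Q. Then the roots of the indicial equation of u'' + r u = 0 at z = 0 are 3/2 and -1/2, and the log-term coefficient at z = 0 vanishes if and only if θ = -4. -/
/-- The Schwarzian derivative S(f) = (f''/f')' - (1/2)(f''/f')². -/
noncomputable def schwarzian (f : ℂ → ℂ) (z : ℂ) : ℂ :=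
  deriv (fun w => deriv (deriv f) w / deriv f w) z
    - (1 / 2) * (deriv (deriv f) z / deriv f z) ^ 2

lemma schw_sq (z : ℂ) (hz : z ≠ 0) :
    schwarzian (fun w => w ^ 2) z = -3 / (2 * z ^ 2) := by
  have hd : ∀ w : ℂ, deriv (fun w : ℂ => 2 * w) w = 2 := fun w => by
    simpa using ((hasDerivAt_id w).const_mul (2 : ℂ)).deriv
  have h1 : deriv (fun w : ℂ => w ^ 2) = fun w => 2 * w := by
    ext w; simp [deriv_pow]
  have h2 : deriv (deriv (fun w : ℂ => w ^ 2)) = fun _ => (2 : ℂ) := by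
    rw [h1]; ext w; exact hd w
  have h3 : (fun w : ℂ => deriv (deriv (fun w : ℂ => w ^ 2)) w / deriv (fun w : ℂ => w ^ 2) w)
      = fun w : ℂ => w⁻¹ := by
    simp only [h1, h2]; ext w
    rw [hd w]
    rcases eq_or_ne w 0 with rfl | hw
    · simp
    · field_simp
  unfold schwarzian
  rw [h3, deriv_inv]
  simp only [h1, h2]
  rw [hd z]
  field_simp
  ring

/-- For G = z², Q = θ/(z(z-1)⁴) dz², r = S(G)/2 + Q: the indicial equation
of u'' + r u = 0 at z = 0 has roots 3/2 and -1/2 (q₀ = -3/4), with expansion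
z²r(z) = -3/4 + θz + z²h(z) (h analytic at 0, h(0) = q₂), and the log-term coefficient
at z = 0 (criterion q₂ + q₁² = 0 for m = 2) vanishes iff θ = -4. -/
theorem type_O14_logterm (θ : ℂ) (hθ : θ ≠ 0)
    (r : ℂ → ℂ)
    (hr : ∀ z : ℂ, z ≠ 0 → z ≠ 1 →
      r z = schwarzian (fun w => w ^ 2) z / 2 + θ / (z * (z - 1) ^ 4)) :
    ((3 / 2 : ℂ) * (3 / 2 - 1) + (-3 / 4) = 0 ∧
     (-1 / 2 : ℂ) * (-1 / 2 - 1) + (-3 / 4) = 0) ∧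
    (∃ h : ℂ → ℂ, AnalyticAt ℂ h 0 ∧
      (∀ᶠ z in nhdsWithin (0 : ℂ) {(0 : ℂ)}ᶜ,
        z ^ 2 * r z = -3 / 4 + θ * z + z ^ 2 * h z) ∧
      ((h 0 + θ ^ 2 = 0) ↔ θ = -4)) := by
  refine ⟨⟨by ring, by ring⟩, ?_⟩
  refine ⟨fun z => θ * (4 - 6 * z + 4 * z ^ 2 - z ^ 3) / (z - 1) ^ 4, ?_, ?_, ?_⟩
  · apply AnalyticAt.div
    · exact analyticAt_const.mul
        (((analyticAt_const.sub (analyticAt_const.mul analyticAt_id)).add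
          (analyticAt_const.mul (analyticAt_id.pow 2))).sub (analyticAt_id.pow 3))
    · exact (analyticAt_id.sub analyticAt_const).pow 4
    · norm_num
  · have hne1 : ∀ᶠ z in nhdsWithin (0 : ℂ) {(0 : ℂ)}ᶜ, z ≠ 1 := by
      apply eventually_nhdsWithin_of_eventually_nhds
      exact eventually_ne_nhds (by norm_num)
    filter_upwards [self_mem_nhdsWithin, hne1] with z hz0 hz1
    have hz0' : z ≠ 0 := hz0
    rw [hr z hz0' hz1, schw_sq z hz0']
    have hz1' : z - 1 ≠ 0 := sub_ne_zero.mpr hz1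
    field_simp [hz0', hz1']
    ring
  · simp only []
    have h0 : ((0:ℂ) - 1) ^ 4 = 1 := by norm_num
    rw [show θ * (4 - 6 * 0 + 4 * 0 ^ 2 - 0 ^ 3) / ((0:ℂ) - 1) ^ 4 = 4 * θ by rw [h0]; ring]
    constructor
    · intro he
      have : θ * (4 + θ) = 0 := by linear_combination he
      rcases mul_eq_zero.mp this with h | h
      · exact absurd h hθ
      · linear_combination h
    · intro he; subst he; ring
end

section
/- Let r ≥ 3 be an integer and p = (r+2)/(r-2). Let G(z) = z^2, Q = (-2p(p+1)/(z(z-1)^2(z-p)^2)) dz^2, and let g be a primitive of dg = z(z-p)^{r-2}/(z-1)^{r+2} dz (the residue of the right-hand side at z = 1 vanishes, so g is a well-defined meromorphic function on ℂ ∪ {∞}). Then S(g) - S(G) = 2Q, where S denotes the Schwarzian derivative. -/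
/-!
Away from its poles, g' = z (z - p)^m / (z - 1)^n with m = r - 2, n = r + 2, so the logarithmic
derivative of g' is L = 1/z + m/(z - p) - n/(z - 1) and S(g) = L' - L²/2, while S(z²) = -3/(2z²).
What remains is an identity of rational functions, which holds because n - m = 4 and
m (p - 1) = 4.
-/

open Filter Topology

section LogDeriv

variable {𝕜 : Type*} [NontriviallyNormedField 𝕜]

theorem logDeriv_sub_const_pow (a x : 𝕜) (n : ℕ) :
    logDeriv (fun w => (w - a) ^ n) x = n / (x - a) := by
  rw [logDeriv_fun_pow (by fun_prop), logDeriv_apply]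
  simp [div_eq_mul_inv]

theorem logDeriv_mul_pow_div_pow {a b x : 𝕜} (m n : ℕ) (hx : x ≠ 0) (ha : x ≠ a) (hb : x ≠ b) :
    logDeriv (fun w => w * (w - a) ^ m / (w - b) ^ n) x = 1 / x + m / (x - a) - n / (x - b) := by
  have ha' : x - a ≠ 0 := sub_ne_zero.mpr ha
  have hb' : x - b ≠ 0 := sub_ne_zero.mpr hb
  rw [logDeriv_div (f := fun w => w * (w - a) ^ m) (g := fun w => (w - b) ^ n) _
      (mul_ne_zero hx (pow_ne_zero _ ha')) (pow_ne_zero _ hb') (by fun_prop) (by fun_prop),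
    logDeriv_mul (f := fun w => w) (g := fun w => (w - a) ^ m) _ hx (pow_ne_zero _ ha')
      (by fun_prop) (by fun_prop),
    logDeriv_id', logDeriv_sub_const_pow, logDeriv_sub_const_pow]

theorem hasDerivAt_const_div_sub {a c x : 𝕜} (hx : x ≠ a) :
    HasDerivAt (fun w => c / (w - a)) (-c / (x - a) ^ 2) x := by
  have := ((hasDerivAt_id x).sub_const a).inv (sub_ne_zero.mpr hx)
  simpa [div_eq_mul_inv, neg_div] using this.const_mul c

end LogDeriv

theorem schwarzian_eq_of_logDeriv_deriv_eventuallyEq {f L : ℂ → ℂ} {L' z : ℂ}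
    (h : logDeriv (deriv f) =ᶠ[𝓝 z] L) (hL : HasDerivAt L L' z) :
    schwarzian f z = L' - 1 / 2 * L z ^ 2 := by
  change deriv (logDeriv (deriv f)) z - 1 / 2 * logDeriv (deriv f) z ^ 2 = _
  rw [h.deriv_eq, hL.deriv, h.eq_of_nhds]

theorem schwarzian_pow {k : ℕ} (hk : k ≠ 0) {z : ℂ} (hz : z ≠ 0) :
    schwarzian (· ^ k) z = (1 - k ^ 2) / (2 * z ^ 2) := by
  have hlog : logDeriv (deriv (· ^ k)) = fun w : ℂ => ((k - 1 : ℕ) : ℂ) / w := by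
    have hderiv : deriv (· ^ k) = fun w : ℂ => k * w ^ (k - 1) :=
      funext fun w => deriv_pow_field k
    ext w
    rw [hderiv, logDeriv_const_mul _ _ (Nat.cast_ne_zero.mpr hk), logDeriv_pow]
  have hL := hasDerivAt_const_div_sub (a := 0) (c := ((k - 1 : ℕ) : ℂ)) hz
  simp only [sub_zero] at hL
  rw [schwarzian_eq_of_logDeriv_deriv_eventuallyEq (.of_eq hlog) hL,
    Nat.cast_sub (Nat.one_le_iff_ne_zero.mpr hk)]
  field_simp
  ring

theorem schwarzian_eq_of_deriv_eventuallyEq_mul_pow_div_pow {f : ℂ → ℂ} {a b z : ℂ} {m n : ℕ}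
    (hf : deriv f =ᶠ[𝓝 z] fun w => w * (w - a) ^ m / (w - b) ^ n)
    (hz : z ≠ 0) (ha : z ≠ a) (hb : z ≠ b) :
    schwarzian f z = (-1 / z ^ 2 + -m / (z - a) ^ 2 - -n / (z - b) ^ 2)
      - 1 / 2 * (1 / z + m / (z - a) - n / (z - b)) ^ 2 := by
  have hlog : logDeriv (deriv f) =ᶠ[𝓝 z] fun w => 1 / w + m / (w - a) - n / (w - b) := by
    filter_upwards [hf.eventuallyEq_nhds, isOpen_ne.mem_nhds hz, isOpen_ne.mem_nhds ha,
      isOpen_ne.mem_nhds hb] with w hw hw0 hwa hwb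
    rw [(logDeriv_congr_nhds hw).eq_of_nhds, logDeriv_mul_pow_div_pow m n hw0 hwa hwb]
  have hL := ((hasDerivAt_const_div_sub (a := 0) (c := (1 : ℂ)) hz).fun_add
    (hasDerivAt_const_div_sub (c := (m : ℂ)) ha)).fun_sub
    (hasDerivAt_const_div_sub (c := (n : ℂ)) hb)
  simp only [sub_zero] at hL
  rw [schwarzian_eq_of_logDeriv_deriv_eventuallyEq hlog hL]

theorem partialFractions_identity {m n p z : ℂ} (hm : m * (p - 1) = 4) (hn : n = m + 4)
    (hz : z ≠ 0) (hz1 : z ≠ 1) (hzp : z ≠ p) :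
    (-1 / z ^ 2 + -m / (z - p) ^ 2 - -n / (z - 1) ^ 2
        - 1 / 2 * (1 / z + m / (z - p) - n / (z - 1)) ^ 2) - (1 - 2 ^ 2) / (2 * z ^ 2)
      = 2 * (-2 * p * (p + 1) / (z * (z - 1) ^ 2 * (z - p) ^ 2)) := by
  have hz1' : z - 1 ≠ 0 := sub_ne_zero.mpr hz1
  have hzp' : z - p ≠ 0 := sub_ne_zero.mpr hzp
  have hp : p - 1 ≠ 0 := by rintro h; simp [h] at hm
  obtain rfl : m = 4 / (p - 1) := by rw [← hm]; field_simp
  subst hn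
  field_simp
  ring

/-- For an integer r ≥ 3, p = (r+2)/(r-2), G = z²,
Q = -2p(p+1)/(z(z-1)²(z-p)²) dz², and g a primitive of
dg = z(z-p)^{r-2}/(z-1)^{r+2} dz, one has S(g) - S(G) = 2Q. -/
theorem type_O122_H3_schwarzian (r : ℕ) (hr : 3 ≤ r) (p : ℂ)
    (hp : p = ((r : ℂ) + 2) / ((r : ℂ) - 2))
    (g : ℂ → ℂ)
    (hg : ∀ z : ℂ, z ≠ 1 →
      deriv g z = z * (z - p) ^ (r - 2) / (z - 1) ^ (r + 2)) :
    ∀ z : ℂ, z ≠ 0 → z ≠ 1 → z ≠ p →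
      schwarzian g z - schwarzian (fun w => w ^ 2) z
        = 2 * (-2 * p * (p + 1) / (z * (z - 1) ^ 2 * (z - p) ^ 2)) := by
  intro z hz0 hz1 hzp
  have hderiv : deriv g =ᶠ[𝓝 z] fun w => w * (w - p) ^ (r - 2) / (w - 1) ^ (r + 2) := by
    filter_upwards [isOpen_ne.mem_nhds hz1] with w hw using hg w hw
  have hm : ((r - 2 : ℕ) : ℂ) = r - 2 := by rw [Nat.cast_sub (by omega), Nat.cast_two]
  rw [schwarzian_eq_of_deriv_eventuallyEq_mul_pow_div_pow hderiv hz0 hzp hz1,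
    schwarzian_pow two_ne_zero hz0]
  push_cast
  refine partialFractions_identity ?_ (by rw [hm]; ring) hz0 hz1 hzp
  have hr2 : (r : ℂ) - 2 ≠ 0 := sub_ne_zero.mpr (by exact_mod_cast (by omega : r ≠ 2))
  rw [hm, hp]
  field_simp
  ring
end

section
/- Let m ≥ 2 be an integer and let c(θ) be a monic-up-to-scalar polynomial in θ of degree m of the form c(θ) = t_m(θ^m + Λ_m θ^{m-1} + ...) with t_m ≠ 0 and Λ_m = m(49-m^2)/12. If m ≥ 8, then c has at least one root θ ∈ ℂ \ {0, (1-m^2)/4}. -/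
/-! After division by the leading coefficient, `Λ_m` is minus the sum of the roots. If every
root were `0` or `(1 - m²)/4 < 0`, that sum would have nonpositive real part, forcing `Λ_m ≥ 0`;
but `Λ_m = m(49 - m²)/12 < 0` once `m ≥ 8`. -/

open Polynomial

theorem Complex.re_multisetSum_nonpos {s : Multiset ℂ} (h : ∀ z ∈ s, z.re ≤ 0) :
    s.sum.re ≤ 0 :=
  Multiset.sum_induction (fun z : ℂ => z.re ≤ 0) s
    (fun a b ha hb => by simpa only [Complex.add_re] using add_nonpos ha hb) (by simp) h

/-- For `p = 0` the quotient is `0 / 0 = 0`. -/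
theorem Polynomial.re_nextCoeff_div_leadingCoeff_nonneg {p : ℂ[X]}
    (h : ∀ z ∈ p.roots, z.re ≤ 0) : 0 ≤ (p.nextCoeff / p.leadingCoeff).re := by
  rcases eq_or_ne p.leadingCoeff 0 with hlc | hlc
  · simp [hlc]
  have hsum : p.nextCoeff / p.leadingCoeff = -p.roots.sum := by
    rw [(IsAlgClosed.splits p).nextCoeff_eq_neg_sum_roots_mul_leadingCoeff]
    field_simp
  rw [hsum, Complex.neg_re, neg_nonneg]
  exact Complex.re_multisetSum_nonpos h

theorem root_exists_general (m : ℕ) (hm : 8 ≤ m) (c : Polynomial ℂ) (tm : ℂ)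
    (hdeg : c.natDegree = m)
    (hlead : c.coeff m = tm)
    (hnext : c.coeff (m - 1) = tm * ((m : ℂ) * (49 - (m : ℂ) ^ 2) / 12)) :
    ∃ θ : ℂ, c.eval θ = 0 ∧ θ ≠ 0 ∧ θ ≠ (1 - (m : ℂ) ^ 2) / 4 := by
  by_contra! h
  have hm' : (8 : ℝ) ≤ m := by exact_mod_cast hm
  have hc : c ≠ 0 := by
    rintro rfl
    simp only [natDegree_zero] at hdeg
    omega
  have htm : tm ≠ 0 := by
    rw [← hlead, ← hdeg]
    exact leadingCoeff_ne_zero.2 hc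
  have hroots : ∀ z ∈ c.roots, z.re ≤ 0 := by
    intro z hz
    rcases eq_or_ne z 0 with rfl | hz0
    · simp
    rw [h z ((mem_roots hc).1 hz) hz0]
    have hs : (1 - (m : ℝ) ^ 2) / 4 ≤ 0 := by nlinarith
    simpa [sq] using hs
  have hΛ : c.nextCoeff / c.leadingCoeff = (m : ℂ) * (49 - (m : ℂ) ^ 2) / 12 := by
    rw [nextCoeff_of_natDegree_pos (by omega), leadingCoeff, hdeg, hlead, hnext]
    field_simp
  have hnonneg := re_nextCoeff_div_leadingCoeff_nonneg hroots
  have hΛre : ((m : ℂ) * (49 - (m : ℂ) ^ 2) / 12).re = (m : ℝ) * (49 - (m : ℝ) ^ 2) / 12 := by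
    simp [sq]
  rw [hΛ, hΛre] at hnonneg
  nlinarith

/-- Let m ≥ 8 and let c(θ) = t_m(θ^m + Λ_m θ^{m-1} + ...) be a degree-m
polynomial with t_m ≠ 0 and Λ_m = m(49-m²)/12.  Then c has a root
θ ∈ ℂ \ {0, (1-m²)/4}. -/
theorem root_exists (m : ℕ) (hm : 8 ≤ m) (c : Polynomial ℂ) (tm : ℂ) (htm : tm ≠ 0)
    (hdeg : c.natDegree = m)
    (hlead : c.coeff m = tm)
    (hnext : c.coeff (m - 1) = tm * ((m : ℂ) * (49 - (m : ℂ) ^ 2) / 12)) :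
    ∃ θ : ℂ, c.eval θ = 0 ∧ θ ≠ 0 ∧ θ ≠ (1 - (m : ℂ) ^ 2) / 4 :=
  root_exists_general m hm c tm hdeg hlead hnext
end

section
/- For the ODE z^2 X'' - z X' + θ(z-1) X = 0 with θ ≠ 0 (equation (E.2)# for the type O(-2,-3) data with μ_1 = 1), the log-term coefficient at z = 0 is nonzero. Concretely, with p_0 = -1, q_0 = -θ, q_1 = θ and all other coefficients zero, the recursion a_0 = 1, a_j = (1/(j(m-j))) Σ_{k=0}^{j-1}((λ_2+k)p_{j-k}+q_{j-k}) a_k produces a log-term coefficient c which is a nonzero multiple of θ^m, hence c ≠ 0. -/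
/-!
Since `p` vanishes beyond degree `0` and `q` beyond degree `1`, only the term `k = j - 1`
survives in each recursion sum, so the recursion reads `a j = θ a (j - 1) / (j (m - j))`.
It telescopes to `a j = θ ^ j / (j! (m - 1) (m - 2) ⋯ (m - j))`, and then
`c = -θ a (m - 1) / m = -θ ^ m / (m! (m - 1)!)`.
-/

open Finset

theorem sum_range_frobenius_eq_of_degree_le_one {R : Type*} [CommRing R] (p q a : ℕ → R)
    (lam : R) (hp : ∀ j, 1 ≤ j → p j = 0) (hq : ∀ j, 2 ≤ j → q j = 0) (n : ℕ) :
    ∑ k ∈ range (n + 1), ((lam + k) * p (n + 1 - k) + q (n + 1 - k)) * a k = q 1 * a n := by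
  rw [sum_range_succ, Nat.add_sub_cancel_left, hp 1 le_rfl, mul_zero, zero_add,
    add_eq_right]
  refine sum_eq_zero fun k hk ↦ ?_
  have hk : k < n := mem_range.mp hk
  rw [hp _ (by omega), hq _ (by omega)]
  ring

theorem eq_pow_div_factorial_mul_descFactorial {K : Type*} [Field K] (θ : K) (m : ℕ)
    (a : ℕ → K) (ha0 : a 0 = 1)
    (ha : ∀ j, 1 ≤ j → j ≤ m - 1 → a j = 1 / ((j : K) * ((m : K) - j)) * (θ * a (j - 1))) :
    ∀ j ≤ m - 1, a j = θ ^ j / ((j.factorial : K) * ((m - 1).descFactorial j : K)) := by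
  intro j hj
  induction j with
  | zero => simp [ha0]
  | succ j ih =>
    have hcast : (m : K) - (j + 1 : ℕ) = ((m - 1 - j : ℕ) : K) := by
      rw [Nat.cast_sub (by omega), Nat.cast_sub (by omega)]
      push_cast
      ring
    rw [ha (j + 1) (by omega) hj, hcast, Nat.add_sub_cancel, ih (by omega), Nat.factorial_succ,
      Nat.descFactorial_succ, Nat.cast_mul, Nat.cast_mul]
    ring

theorem type_O23_mu1_no_logfree_general (θ : ℂ) (hθ : θ ≠ 0) (m : ℕ) (hm : 1 ≤ m)
    (p q : ℕ → ℂ) (lam2 : ℂ)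
    (hp : ∀ j, 1 ≤ j → p j = 0)
    (hq1 : q 1 = θ) (hq : ∀ j, 2 ≤ j → q j = 0)
    (a : ℕ → ℂ) (ha0 : a 0 = 1)
    (ha : ∀ j, 1 ≤ j → j ≤ m - 1 →
      a j = (1 / ((j : ℂ) * ((m : ℂ) - (j : ℂ)))) *
        ∑ k ∈ Finset.range j, ((lam2 + (k : ℂ)) * p (j - k) + q (j - k)) * a k)
    (c : ℂ)
    (hc : c = -(1 / (m : ℂ)) *
      ∑ k ∈ Finset.range m, ((lam2 + (k : ℂ)) * p (m - k) + q (m - k)) * a k) :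
    c = -θ ^ m / ((m.factorial : ℂ) * ((m - 1).factorial : ℂ)) ∧ c ≠ 0 := by
  have hsum : ∀ j, 1 ≤ j →
      ∑ k ∈ range j, ((lam2 + k) * p (j - k) + q (j - k)) * a k = θ * a (j - 1) := by
    rintro (_ | j) hj
    · omega
    · rw [sum_range_frobenius_eq_of_degree_le_one p q a lam2 hp hq, hq1, Nat.add_sub_cancel]
  have ha' := eq_pow_div_factorial_mul_descFactorial θ m a ha0 fun j hj hjm ↦ by
    rw [ha j hj hjm, hsum j hj]
  obtain ⟨n, rfl⟩ : ∃ n, m = n + 1 := ⟨m - 1, by omega⟩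
  simp only [Nat.add_sub_cancel] at ha' ⊢
  have hc' : c = -θ ^ (n + 1) / ((n + 1).factorial * n.factorial) := by
    rw [hc, hsum _ hm, Nat.add_sub_cancel, ha' n le_rfl, Nat.descFactorial_self,
      Nat.factorial_succ, Nat.cast_mul]
    ring
  refine ⟨hc', ?_⟩
  rw [hc']
  exact div_ne_zero (neg_ne_zero.mpr (pow_ne_zero _ hθ))
    (mul_ne_zero (Nat.cast_ne_zero.mpr (Nat.factorial_ne_zero _))
      (Nat.cast_ne_zero.mpr (Nat.factorial_ne_zero _)))

/-- For the ODE z²X'' - zX' + θ(z-1)X = 0 (θ ≠ 0), i.e. p₀ = -1,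
q₀ = -θ, q₁ = θ, all other coefficients zero: if the roots of the indicial equation
t(t-1) - t - θ = 0 differ by a positive integer m, then the log-term coefficient
c = -θ^m/(m!(m-1)!), which is nonzero. -/
theorem type_O23_mu1_no_logfree (θ : ℂ) (hθ : θ ≠ 0) (m : ℕ) (hm : 1 ≤ m)
    (hm2 : ((m : ℂ)) ^ 2 = 4 + 4 * θ)
    (p q : ℕ → ℂ) (lam2 : ℂ)
    (hp0 : p 0 = -1) (hp : ∀ j, 1 ≤ j → p j = 0)
    (hq0 : q 0 = -θ) (hq1 : q 1 = θ) (hq : ∀ j, 2 ≤ j → q j = 0)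
    (hlam2 : lam2 = ((1 - p 0) - (m : ℂ)) / 2)
    (a : ℕ → ℂ) (ha0 : a 0 = 1)
    (ha : ∀ j, 1 ≤ j → j ≤ m - 1 →
      a j = (1 / ((j : ℂ) * ((m : ℂ) - (j : ℂ)))) *
        ∑ k ∈ Finset.range j, ((lam2 + (k : ℂ)) * p (j - k) + q (j - k)) * a k)
    (c : ℂ)
    (hc : c = -(1 / (m : ℂ)) *
      ∑ k ∈ Finset.range m, ((lam2 + (k : ℂ)) * p (m - k) + q (m - k)) * a k) :
    c = -θ ^ m / ((m.factorial : ℂ) * ((m - 1).factorial : ℂ)) ∧ c ≠ 0 :=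
  type_O23_mu1_no_logfree_general θ hθ m hm p q lam2 hp hq1 hq a ha0 ha c hc
end
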